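/- Let A, B, C be deterministic parity tree automata over the same finite nonempty alphabet Σ, with pairwise disjoint state sets, and let p be a state of C. Define C_{p:=A} as the deterministic parity tree automaton whose state set is Q^C ∪ Q^A, whose initial state is q₀^C, whose ranks are inherited from C and A, whose transitions from states of Q^A are as in A, and whose transition from q ∈ Q^C on σ ∈ Σ is δ^C(q,σ) with every component equal to p replaced by q₀^A; define C_{p:=B} analogously. If L(A) ≤_W L(B), then L(C_{p:=A}) ≤_W L(C_{p:=B}). -/
import Mathlib


open Filter

/-- A deterministic parity tree automaton over alphabet `Alpha` with state set `Q`. -/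
structure DPTA (Alpha : Type) (Q : Type) where
  init : Q
  delta : Q → Alpha → Q × Q
  rank : Q → ℕ

namespace DPTA

variable {Alpha Q : Type}

/-- The state reached in one step from `q` reading letter `s` in direction `d`. -/
def next (M : DPTA Alpha Q) (q : Q) (s : Alpha) (d : Bool) : Q :=
  if d then (M.delta q s).2 else (M.delta q s).1

/-- The state of the run started in `q` on the tree `t` at the node `v`
(nodes are words over `{0,1}`, head = first direction from the root). -/
def runFrom (M : DPTA Alpha Q) : Q → (List Bool → Alpha) → List Bool → Q
  | q, _, [] => q
  | q, t, d :: v => runFrom M (M.next q (t []) d) (fun u => t (d :: u)) v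

/-- The state of the (unique) run of `M` on `t` at node `v`. -/
def run (M : DPTA Alpha Q) (t : List Bool → Alpha) (v : List Bool) : Q :=
  runFrom M M.init t v

/-- Parity acceptance: the largest value occurring infinitely often is even. -/
def ParityAccept (f : ℕ → ℕ) : Prop :=
  Even (sSup {r : ℕ | ∃ᶠ n in atTop, f n = r})

/-- The prefix of length `n` of an infinite path. -/
def pref (π : ℕ → Bool) (n : ℕ) : List Bool :=
  List.ofFn fun i : Fin n => π i

/-- The run of `M` on `t` started at state `q` is accepting. -/
def AcceptsFrom (M : DPTA Alpha Q) (q : Q) (t : List Bool → Alpha) : Prop :=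
  ∀ π : ℕ → Bool, ParityAccept fun n => M.rank (runFrom M q t (pref π n))

/-- The language recognised by `M`: trees with accepting run. -/
def Lang (M : DPTA Alpha Q) : Set (List Bool → Alpha) :=
  {t | M.AcceptsFrom M.init t}

/-- The state reached from `q` following a finite sequence of steps
(steps = letter together with direction). -/
def follow (M : DPTA Alpha Q) (q : Q) (steps : List (Alpha × Bool)) : Q :=
  steps.foldl (fun p s => M.next p s.1 s.2) q

/-- All states visited along a path (the starting state included). -/
def statesOn (M : DPTA Alpha Q) (q : Q) (steps : List (Alpha × Bool)) : List Q :=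
  List.scanl (fun p s => M.next p s.1 s.2) q steps

/-- The largest rank of a state visited along a path. -/
def maxRankOn (M : DPTA Alpha Q) (q : Q) (steps : List (Alpha × Bool)) : ℕ :=
  ((M.statesOn q steps).map M.rank).foldr max 0

/-- `steps` forms a loop at `q` (a path of positive length from `q` to `q`). -/
def IsLoop (M : DPTA Alpha Q) (q : Q) (steps : List (Alpha × Bool)) : Prop :=
  steps ≠ [] ∧ M.follow q steps = q

/-- `M` contains an `(i,k)`-flower: loops `lam i, …, lam k` at a common state `q`,
the largest rank on `lam j` has the parity of `j` and increases strictly with `j`. -/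
def HasFlower (M : DPTA Alpha Q) (i k : ℕ) : Prop :=
  ∃ (q : Q) (lam : ℕ → List (Alpha × Bool)),
    (∀ j, i ≤ j → j ≤ k → M.IsLoop q (lam j) ∧ M.maxRankOn q (lam j) % 2 = j % 2) ∧
    (∀ j, i ≤ j → j < k → M.maxRankOn q (lam j) < M.maxRankOn q (lam (j + 1)))

/-- `q` is reachable from the initial state. -/
def Reachable (M : DPTA Alpha Q) (q : Q) : Prop :=
  ∃ steps, M.follow M.init steps = q

/-- `q` is productive: it occurs in some accepting run of `M`. -/
def Productive (M : DPTA Alpha Q) (q : Q) : Prop :=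
  ∃ t ∈ M.Lang, ∃ v, M.run t v = q

/-- The transition from `q` reading `s` is used in some accepting run of `M`. -/
def ProductiveTrans (M : DPTA Alpha Q) (q : Q) (s : Alpha) : Prop :=
  ∃ t ∈ M.Lang, ∃ v, M.run t v = q ∧ t v = s

/-- `q` is all-rejecting: started from `q`, the automaton accepts no tree. -/
def AllRejecting (M : DPTA Alpha Q) (q : Q) : Prop :=
  ∀ t, ¬ M.AcceptsFrom q t

/-- `M` is normalized: every state is reachable, every state is productive except
possibly one all-rejecting state `⊥` with `δ(⊥,σ) = (⊥,⊥)`, and every transition is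
productive or of the form `δ(q,σ) = (⊥,⊥)`. -/
def Normalized (M : DPTA Alpha Q) : Prop :=
  (∀ q, M.Reachable q) ∧
  ∃ bot : Option Q,
    (∀ q, some q ≠ bot → M.Productive q) ∧
    (∀ q, some q = bot → M.AllRejecting q ∧ ∀ s, M.delta q s = (q, q)) ∧
    (∀ q s, M.ProductiveTrans q s ∨
      (some (M.delta q s).1 = bot ∧ some (M.delta q s).2 = bot))

end DPTA


/-- Wadge reducibility: `A ≤_W B` iff `A` is the preimage of `B` under a continuous map. -/
def WadgeLE {X Y : Type} [TopologicalSpace X] [TopologicalSpace Y]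
    (A : Set X) (B : Set Y) : Prop :=
  ∃ φ : X → Y, Continuous φ ∧ A = φ ⁻¹' B

/-- The automaton `C` with the state `p` substituted by the automaton `A`: states are the
disjoint union of the states of `C` and of `A`, the initial state is the one of `C`,
ranks are inherited, transitions inside each part are as before, and every transition
of `C` into `p` is redirected to the initial state of `A`. -/
noncomputable def substAut {Alpha QC QA : Type} (C : DPTA Alpha QC) (p : QC)
    (A : DPTA Alpha QA) : DPTA Alpha (QC ⊕ QA) :=
  letI := Classical.decEq QC
  { init := Sum.inl C.init
    delta := fun q s =>
      match q with
      | Sum.inl c =>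
          ((if (C.delta c s).1 = p then Sum.inr A.init else Sum.inl (C.delta c s).1),
           (if (C.delta c s).2 = p then Sum.inr A.init else Sum.inl (C.delta c s).2))
      | Sum.inr a => (Sum.inr (A.delta a s).1, Sum.inr (A.delta a s).2)
    rank := fun q =>
      match q with
      | Sum.inl c => C.rank c
      | Sum.inr a => A.rank a }


section Aux

open DPTA

variable {Alpha QC QX : Type}

lemma runFrom_snoc {Q : Type} (M : DPTA Alpha Q) (q : Q) (t : List Bool → Alpha)
    (v : List Bool) (d : Bool) :
    M.runFrom q t (v ++ [d]) = M.next (M.runFrom q t v) (t v) d := by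
  induction v generalizing q t with
  | nil => rfl
  | cons d' v ih => simp only [List.cons_append, runFrom]; exact ih _ _

/-- The subtree of `t` rooted at `w`. -/
def subtree (t : List Bool → Alpha) (w : List Bool) : List Bool → Alpha := fun u => t (w ++ u)

open Classical in
/-- One step of the "skeleton" of the run of a substituted automaton. -/
noncomputable def cstep (C : DPTA Alpha QC) (p : QC) (x : QC ⊕ List Bool) (s : Alpha)
    (d : Bool) (v : List Bool) : QC ⊕ List Bool :=
  match x with
  | Sum.inl c => if C.next c s d = p then Sum.inr v else Sum.inl (C.next c s d)
  | Sum.inr w => Sum.inr w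

noncomputable def traceRev (C : DPTA Alpha QC) (p : QC) (t : List Bool → Alpha) :
    List Bool → QC ⊕ List Bool
  | [] => Sum.inl C.init
  | d :: r => cstep C p (traceRev C p t r) (t r.reverse) d (r.reverse ++ [d])

/-- The "skeleton" of the run of a substituted automaton at node `v`: either a state of `C`,
or the entry node into the substituted part. -/
noncomputable def trace (C : DPTA Alpha QC) (p : QC) (t : List Bool → Alpha)
    (v : List Bool) : QC ⊕ List Bool :=
  traceRev C p t v.reverse

lemma trace_nil (C : DPTA Alpha QC) (p : QC) (t : List Bool → Alpha) :
    trace C p t [] = Sum.inl C.init := rfl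

lemma trace_snoc (C : DPTA Alpha QC) (p : QC) (t : List Bool → Alpha) (v : List Bool)
    (d : Bool) :
    trace C p t (v ++ [d]) = cstep C p (trace C p t v) (t v) d (v ++ [d]) := by
  unfold trace
  rw [List.reverse_append]
  simp [traceRev]

lemma cstep_inr (C : DPTA Alpha QC) (p : QC) (w : List Bool) (s : Alpha) (d : Bool)
    (v : List Bool) : cstep C p (Sum.inr w) s d v = Sum.inr w := rfl

lemma cstep_inl_pos (C : DPTA Alpha QC) {p : QC} {c : QC} {s : Alpha} {d : Bool}
    (v : List Bool) (hc : C.next c s d = p) : cstep C p (Sum.inl c) s d v = Sum.inr v := by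
  simp [cstep, hc]

lemma cstep_inl_neg (C : DPTA Alpha QC) {p : QC} {c : QC} {s : Alpha} {d : Bool}
    (v : List Bool) (hc : ¬ C.next c s d = p) :
    cstep C p (Sum.inl c) s d v = Sum.inl (C.next c s d) := by
  simp [cstep, hc]

lemma trace_inr {C : DPTA Alpha QC} {p : QC} {t : List Bool → Alpha} {v w : List Bool}
    (h : trace C p t v = Sum.inr w) : w <+: v ∧ trace C p t w = Sum.inr w := by
  induction v using List.reverseRecOn with
  | nil => simp [trace_nil] at h
  | append_singleton v d ih =>
    rw [trace_snoc] at h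
    cases hv : trace C p t v with
    | inl c =>
      rw [hv] at h
      by_cases hc : C.next c (t v) d = p
      · rw [cstep_inl_pos C _ hc] at h
        cases h
        exact ⟨List.prefix_rfl, by rw [trace_snoc, hv, cstep_inl_pos C _ hc]⟩
      · rw [cstep_inl_neg C _ hc] at h
        cases h
    | inr w' =>
      rw [hv, cstep_inr] at h
      cases h
      obtain ⟨h1, h2⟩ := ih hv
      exact ⟨h1.trans (List.prefix_append v [d]), h2⟩

lemma trace_inr_mono {C : DPTA Alpha QC} {p : QC} {t : List Bool → Alpha} {v w : List Bool}
    (h : trace C p t v = Sum.inr w) (u : List Bool) : trace C p t (v ++ u) = Sum.inr w := by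
  induction u using List.reverseRecOn with
  | nil => simpa using h
  | append_singleton u d ih =>
    rw [← List.append_assoc, trace_snoc, ih, cstep_inr]

lemma trace_congr {C : DPTA Alpha QC} {p : QC} {t t' : List Bool → Alpha} (v : List Bool)
    (H : ∀ v', v' <+: v → v' ≠ v → (∃ c, trace C p t v' = Sum.inl c) → t v' = t' v') :
    trace C p t v = trace C p t' v := by
  induction v using List.reverseRecOn with
  | nil => rfl
  | append_singleton v d ih =>
    have hne : ∀ v' : List Bool, v' <+: v → v' ≠ v ++ [d] := by
      intro v' h1 e
      have := h1.length_le
      rw [e] at this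
      simp at this
    have hv : trace C p t v = trace C p t' v :=
      ih fun v' h1 h2 h3 => H v' (h1.trans (List.prefix_append v [d])) (hne v' h1) h3
    rw [trace_snoc, trace_snoc, ← hv]
    cases htv : trace C p t v with
    | inl c =>
      have htv' : t v = t' v :=
        H v (List.prefix_append v [d]) (hne v List.prefix_rfl) ⟨c, htv⟩
      rw [htv']
    | inr w => rw [cstep_inr, cstep_inr]

variable {QA QB : Type}

lemma substAut_next_inr (C : DPTA Alpha QC) (p : QC) (X : DPTA Alpha QX) (a : QX)
    (s : Alpha) (d : Bool) :
    (substAut C p X).next (Sum.inr a) s d = Sum.inr (X.next a s d) := by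
  cases d <;> rfl

lemma substAut_next_inl_pos (C : DPTA Alpha QC) {p : QC} (X : DPTA Alpha QX) {c : QC}
    {s : Alpha} {d : Bool} (hc : C.next c s d = p) :
    (substAut C p X).next (Sum.inl c) s d = Sum.inr X.init := by
  cases d <;> simp [DPTA.next, substAut] at hc ⊢ <;> simp [hc]

lemma substAut_next_inl_neg (C : DPTA Alpha QC) {p : QC} (X : DPTA Alpha QX) {c : QC}
    {s : Alpha} {d : Bool} (hc : ¬ C.next c s d = p) :
    (substAut C p X).next (Sum.inl c) s d = Sum.inl (C.next c s d) := by
  cases d <;> simp [DPTA.next, substAut] at hc ⊢ <;> simp [hc]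

lemma substAut_rank_inl (C : DPTA Alpha QC) (p : QC) (X : DPTA Alpha QX) (c : QC) :
    (substAut C p X).rank (Sum.inl c) = C.rank c := rfl

lemma substAut_rank_inr (C : DPTA Alpha QC) (p : QC) (X : DPTA Alpha QX) (a : QX) :
    (substAut C p X).rank (Sum.inr a) = X.rank a := rfl

/-- Interpretation of a skeleton value as a state of the substituted automaton. -/
def interp (X : DPTA Alpha QX) (t : List Bool → Alpha) (v : List Bool) :
    QC ⊕ List Bool → QC ⊕ QX
  | Sum.inl c => Sum.inl c
  | Sum.inr w => Sum.inr (X.runFrom X.init (subtree t w) (v.drop w.length))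

lemma run_subst (C : DPTA Alpha QC) (p : QC) (X : DPTA Alpha QX) (t : List Bool → Alpha)
    (v : List Bool) :
    (substAut C p X).run t v = interp X t v (trace C p t v) := by
  induction v using List.reverseRecOn with
  | nil => rfl
  | append_singleton v d ih =>
    have : (substAut C p X).run t (v ++ [d])
        = (substAut C p X).next ((substAut C p X).run t v) (t v) d :=
      runFrom_snoc _ _ _ _ _
    rw [this, ih]
    cases hv : trace C p t v with
    | inl c =>
      by_cases hc : C.next c (t v) d = p
      · rw [trace_snoc, hv, cstep_inl_pos C _ hc]
        show (substAut C p X).next (Sum.inl c) (t v) d = _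
        rw [substAut_next_inl_pos C X hc]
        simp [interp, List.drop_length, DPTA.runFrom]
      · rw [trace_snoc, hv, cstep_inl_neg C _ hc]
        show (substAut C p X).next (Sum.inl c) (t v) d = _
        rw [substAut_next_inl_neg C X hc]
        rfl
    | inr w =>
      obtain ⟨hpre, -⟩ := trace_inr hv
      obtain ⟨u, hu⟩ := hpre
      rw [trace_snoc, hv, cstep_inr]
      show (substAut C p X).next (Sum.inr _) (t v) d = _
      rw [substAut_next_inr]
      show _ = Sum.inr (X.runFrom X.init (subtree t w) ((v ++ [d]).drop w.length))
      subst hu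
      rw [List.append_assoc, List.drop_left, List.drop_left, runFrom_snoc]
      rfl

lemma freq_shift (P : ℕ → Prop) (k : ℕ) :
    (∃ᶠ n in atTop, P (n + k)) ↔ ∃ᶠ n in atTop, P n := by
  conv_rhs => rw [← Filter.map_add_atTop_eq_nat k]
  rw [Filter.frequently_map]

lemma parityAccept_shift (f : ℕ → ℕ) (k : ℕ) :
    ParityAccept (fun n => f (n + k)) ↔ ParityAccept f := by
  unfold DPTA.ParityAccept
  have : {r : ℕ | ∃ᶠ n in atTop, f (n + k) = r} = {r : ℕ | ∃ᶠ n in atTop, f n = r} :=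
    Set.ext fun r => freq_shift (fun n => f n = r) k
  rw [this]

lemma pref_zero (π : ℕ → Bool) : pref π 0 = [] := rfl

lemma pref_succ (π : ℕ → Bool) (n : ℕ) : pref π (n + 1) = pref π n ++ [π n] := by
  unfold DPTA.pref
  rw [List.ofFn_succ']
  simp

lemma pref_length (π : ℕ → Bool) (n : ℕ) : (pref π n).length = n := by
  simp [DPTA.pref]

lemma pref_add (π : ℕ → Bool) (k n : ℕ) :
    pref π (k + n) = pref π k ++ pref (fun i => π (k + i)) n := by
  induction n with
  | zero => simp [pref_zero]
  | succ n ih =>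
    rw [show k + (n + 1) = (k + n) + 1 from rfl, pref_succ, ih, pref_succ, List.append_assoc]

lemma pref_prefix (π : ℕ → Bool) {m n : ℕ} (h : m ≤ n) : pref π m <+: pref π n := by
  obtain ⟨d, rfl⟩ := Nat.exists_eq_add_of_le h
  rw [pref_add]
  exact List.prefix_append _ _

lemma eq_pref_of_prefix {π : ℕ → Bool} {w : List Bool} {n : ℕ} (h : w <+: pref π n) :
    w = pref π w.length := by
  have hl : w.length ≤ n := by simpa [pref_length] using h.length_le
  have h2 : pref π w.length <+: pref π n := pref_prefix π hl
  have e1 := List.prefix_iff_eq_take.mp h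
  have e2 := List.prefix_iff_eq_take.mp h2
  rw [pref_length] at e2
  exact e1.trans e2.symm

/-- The infinite path obtained by prepending the finite word `w` to `π`. -/
def extPath (w : List Bool) (π : ℕ → Bool) : ℕ → Bool := fun i =>
  if h : i < w.length then w.get ⟨i, h⟩ else π (i - w.length)

lemma pref_extPath (w : List Bool) (π : ℕ → Bool) : pref (extPath w π) w.length = w := by
  unfold DPTA.pref
  rw [show (fun i : Fin w.length => extPath w π i) = w.get from
    funext fun i => by simp [extPath, i.isLt]]
  exact List.ofFn_get w

lemma extPath_shift (w : List Bool) (π : ℕ → Bool) (i : ℕ) :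
    extPath w π (w.length + i) = π i := by
  simp [extPath]

/-- Rank read off from a skeleton value (arbitrary on entry nodes). -/
def cRank (C : DPTA Alpha QC) : QC ⊕ List Bool → ℕ := Sum.elim C.rank fun _ => 0

lemma seq_eq (C : DPTA Alpha QC) (p : QC) (X : DPTA Alpha QX) (t : List Bool → Alpha)
    {w : List Bool} (hw : trace C p t w = Sum.inr w) (u : List Bool) :
    (substAut C p X).rank ((substAut C p X).run t (w ++ u))
      = X.rank (X.runFrom X.init (subtree t w) u) := by
  have h2 : trace C p t (w ++ u) = Sum.inr w := trace_inr_mono hw u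
  have h3 := run_subst C p X t (w ++ u)
  rw [h2] at h3
  rw [h3]
  show X.rank _ = _
  rw [List.drop_left]

lemma mem_lang_subst (C : DPTA Alpha QC) (p : QC) (X : DPTA Alpha QX)
    (t : List Bool → Alpha) :
    t ∈ (substAut C p X).Lang ↔
      ((∀ π : ℕ → Bool, (∀ n, ∃ c, trace C p t (pref π n) = Sum.inl c) →
          ParityAccept fun n => cRank C (trace C p t (pref π n))) ∧
       ∀ w, trace C p t w = Sum.inr w → subtree t w ∈ X.Lang) := by
  set S := substAut C p X with hS
  have hmem : t ∈ S.Lang ↔ ∀ π : ℕ → Bool,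
      ParityAccept fun n => S.rank (S.run t (pref π n)) := Iff.rfl
  rw [hmem]
  constructor
  · intro ht
    constructor
    · intro π hπ
      have hp := ht π
      have he : (fun n => cRank C (trace C p t (pref π n)))
          = fun n => S.rank (S.run t (pref π n)) := by
        funext n
        obtain ⟨c, hc⟩ := hπ n
        rw [run_subst C p X t (pref π n), hc]
        rfl
      rw [he]
      exact hp
    · intro w hw
      intro π'
      have hp := ht (extPath w π')
      have hp2 := (parityAccept_shift
        (fun n => S.rank (S.run t (pref (extPath w π') n))) w.length).mpr hp
      have key : ∀ m, S.rank (S.run t (pref (extPath w π') (m + w.length)))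
          = X.rank (X.runFrom X.init (subtree t w) (pref π' m)) := by
        intro m
        have h1 : pref (extPath w π') (m + w.length) = w ++ pref π' m := by
          rw [Nat.add_comm, pref_add, pref_extPath]
          congr 1
          have : (fun i => extPath w π' (w.length + i)) = π' :=
            funext fun i => extPath_shift w π' i
          rw [this]
        rw [h1, seq_eq C p X t hw]
      have he : (fun n => S.rank (S.run t (pref (extPath w π') (n + w.length))))
          = fun m => X.rank (X.runFrom X.init (subtree t w) (pref π' m)) :=
        funext key
      rw [← he]
      exact hp2
  · rintro ⟨h1, h2⟩ π
    by_cases hall : ∀ n, ∃ c, trace C p t (pref π n) = Sum.inl c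
    · have hp := h1 π hall
      have he : (fun n => cRank C (trace C p t (pref π n)))
          = fun n => S.rank (S.run t (pref π n)) := by
        funext n
        obtain ⟨c, hc⟩ := hall n
        rw [run_subst C p X t (pref π n), hc]
        rfl
      rw [← he]
      exact hp
    · push_neg at hall
      obtain ⟨n, hn⟩ := hall
      cases htr : trace C p t (pref π n) with
      | inl c => exact absurd htr (hn c)
      | inr w =>
        obtain ⟨hw_pref, hw_self⟩ := trace_inr htr
        have hwn : w = pref π w.length := eq_pref_of_prefix hw_pref
        have hmemA := h2 w hw_self (fun i => π (w.length + i))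
        have key : ∀ m, S.rank (S.run t (pref π (m + w.length)))
            = X.rank (X.runFrom X.init (subtree t w) (pref (fun i => π (w.length + i)) m)) := by
          intro m
          have h1 : pref π (m + w.length) = w ++ pref (fun i => π (w.length + i)) m := by
            rw [Nat.add_comm, pref_add, ← hwn]
          rw [h1, seq_eq C p X t hw_self]
        apply (parityAccept_shift (fun n => S.rank (S.run t (pref π n))) w.length).mp
        rw [funext key]
        exact hmemA

/-- The reduction: copy `t` on the `C` part, apply `φ` to each substituted subtree. -/
noncomputable def Phi (C : DPTA Alpha QC) (p : QC)
    (φ : (List Bool → Alpha) → (List Bool → Alpha)) (t : List Bool → Alpha) :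
    List Bool → Alpha := fun v =>
  match trace C p t v with
  | Sum.inl _ => t v
  | Sum.inr w => φ (subtree t w) (v.drop w.length)

lemma Phi_inl {C : DPTA Alpha QC} {p : QC} {φ : (List Bool → Alpha) → (List Bool → Alpha)}
    {t : List Bool → Alpha} {v : List Bool} {c : QC} (h : trace C p t v = Sum.inl c) :
    Phi C p φ t v = t v := by
  simp [Phi, h]

lemma Phi_inr {C : DPTA Alpha QC} {p : QC} {φ : (List Bool → Alpha) → (List Bool → Alpha)}
    {t : List Bool → Alpha} {v w : List Bool} (h : trace C p t v = Sum.inr w) :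
    Phi C p φ t v = φ (subtree t w) (v.drop w.length) := by
  simp [Phi, h]

lemma trace_Phi (C : DPTA Alpha QC) (p : QC) (φ : (List Bool → Alpha) → (List Bool → Alpha))
    (t : List Bool → Alpha) (v : List Bool) :
    trace C p (Phi C p φ t) v = trace C p t v :=
  (trace_congr v fun _ _ _ h => (Phi_inl h.choose_spec).symm).symm

lemma subtree_Phi {C : DPTA Alpha QC} {p : QC} {φ : (List Bool → Alpha) → (List Bool → Alpha)}
    {t : List Bool → Alpha} {w : List Bool} (h : trace C p t w = Sum.inr w) :
    subtree (Phi C p φ t) w = φ (subtree t w) := by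
  funext u
  show Phi C p φ t (w ++ u) = _
  rw [Phi_inr (trace_inr_mono h u), List.drop_left]

end Aux

/-- Substitution Lemma: if `L(A) ≤_W L(B)`, then
`L(C_{p:=A}) ≤_W L(C_{p:=B})`. -/
theorem substitution_lemma {Alpha QC QA QB : Type} [Fintype Alpha] [Nonempty Alpha]
    [Fintype QC] [Fintype QA] [Fintype QB]
    [TopologicalSpace Alpha] [DiscreteTopology Alpha]
    (C : DPTA Alpha QC) (p : QC) (A : DPTA Alpha QA) (B : DPTA Alpha QB)
    (h : WadgeLE A.Lang B.Lang) :
    WadgeLE (substAut C p A).Lang (substAut C p B).Lang := by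
  obtain ⟨φ, hφc, hφ⟩ := h
  refine ⟨Phi C p φ, ?_, ?_⟩
  · -- continuity
    apply continuous_pi
    intro v
    rw [continuous_iff_continuousAt]
    intro t₀
    set U : Set (List Bool → Alpha) :=
      {t : List Bool → Alpha | ∀ i < v.length, t (v.take i) = t₀ (v.take i)} with hUdef
    have hU : IsOpen U := by
      have : U = ⋂ i ∈ Finset.range v.length,
          (fun t : List Bool → Alpha => t (v.take i)) ⁻¹' {t₀ (v.take i)} := by
        ext t
        simp [hUdef]
      rw [this]
      exact isOpen_biInter_finset fun i _ =>
        (continuous_apply (v.take i)).isOpen_preimage _ (isOpen_discrete _)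
    have ht₀U : t₀ ∈ U := fun i _ => rfl
    have htrace : ∀ t ∈ U, trace C p t v = trace C p t₀ v := by
      intro t ht
      apply trace_congr
      intro v' h1 h2 _
      have hv' : v' = v.take v'.length := List.prefix_iff_eq_take.mp h1
      have hlen : v'.length < v.length :=
        lt_of_le_of_ne h1.length_le fun e => h2 (List.IsPrefix.eq_of_length h1 e)
      rw [hv']
      exact ht v'.length hlen
    cases htr : trace C p t₀ v with
    | inl c =>
      apply ContinuousAt.congr (continuous_apply v).continuousAt
      exact Filter.eventuallyEq_of_mem (hU.mem_nhds ht₀U) fun t ht =>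
        (Phi_inl ((htrace t ht).trans htr)).symm
    | inr w =>
      have hg : Continuous fun t : List Bool → Alpha =>
          φ (subtree t w) (v.drop w.length) :=
        (continuous_apply (v.drop w.length)).comp
          (hφc.comp (continuous_pi fun u => continuous_apply (w ++ u)))
      apply ContinuousAt.congr hg.continuousAt
      exact Filter.eventuallyEq_of_mem (hU.mem_nhds ht₀U) fun t ht =>
        (Phi_inr ((htrace t ht).trans htr)).symm
  · ext t
    rw [Set.mem_preimage, mem_lang_subst, mem_lang_subst]
    simp only [trace_Phi]
    constructor
    · rintro ⟨a, b⟩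
      refine ⟨a, fun w hw => ?_⟩
      rw [subtree_Phi hw]
      have hb := b w hw
      rw [hφ] at hb
      exact hb
    · rintro ⟨a, b⟩
      refine ⟨a, fun w hw => ?_⟩
      have hb := b w hw
      rw [subtree_Phi hw] at hb
      rw [hφ]
      exact hb
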